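/- Let G be a group generated by a family X = (x_1, …, x_n). (a) For every u ∈ G and all palindromes p, q, the commutator [u, pq] = u^{-1} (pq)^{-1} u (pq) is a product of 4 palindromes. (b) For every u ∈ G, every palindrome p, every generator x = x_i, and all integers α, β, the element [u, p x^α] x^β is a product of 4 palindromes. -/

import Mathlib

/-- The element of `G` represented by a word in the alphabet `X^{±1}`:
a letter `(i, true)` stands for `X i` and `(i, false)` for `(X i)⁻¹`. -/
def evalWord {G : Type*} {n : ℕ} [Group G] (X : Fin n → G) (w : List (Fin n × Bool)) : G :=
  (w.map fun l => if l.2 then X l.1 else (X l.1)⁻¹).prod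

/-- `g` is a palindrome with respect to the generating family `X` if it is represented by
some word whose sequence of letters equals its reverse. -/
def IsPalindrome {G : Type*} {n : ℕ} [Group G] (X : Fin n → G) (g : G) : Prop :=
  ∃ w : List (Fin n × Bool), w.reverse = w ∧ evalWord X w = g

/-- `g` is a product of `k` palindromes with respect to `X`. -/
def IsPalProd {G : Type*} {n : ℕ} [Group G] (X : Fin n → G) (k : ℕ) (g : G) : Prop :=
  ∃ f : Fin k → G, (∀ i, IsPalindrome X (f i)) ∧ (List.ofFn f).prod = g

/-- The palindromic length of `g` with respect to `X`, valued in `ℕ∞`. -/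
noncomputable def palLength {G : Type*} {n : ℕ} [Group G] (X : Fin n → G) (g : G) : ℕ∞ :=
  sInf {k : ℕ∞ | ∃ m : ℕ, k = (m : ℕ∞) ∧ IsPalProd X m g}

/-- The palindromic width of `G` with respect to `X`, valued in `ℕ∞`. -/
noncomputable def palWidth {G : Type*} {n : ℕ} [Group G] (X : Fin n → G) : ℕ∞ :=
  ⨆ g : G, palLength X g

/-- The commutator convention of the paper: `[a, b] = a⁻¹ b⁻¹ a b`. -/
def pcomm {G : Type*} [Group G] (a b : G) : G := a⁻¹ * b⁻¹ * a * b

/-!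
Write `u` as a word `w` and let `ρ` be the value of the reversed word. Then `ρ * p * u` is a
palindrome for every palindrome `p`, and
`u⁻¹ q⁻¹ p⁻¹ u p r = (ρ q u)⁻¹ (ρ p⁻¹ u) p r`
is a product of four palindromes whenever `p, q, r` are palindromes. Both parts are instances:
`[u, pq] = u⁻¹ q⁻¹ p⁻¹ u p q`, and `[u, p x^α] x^β = u⁻¹ x^{-α} p⁻¹ u p x^{α+β}`.
-/

section

variable {G : Type*} {n : ℕ} [Group G] (X : Fin n → G)

def letterInv (l : Fin n × Bool) : Fin n × Bool := (l.1, !l.2)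

lemma evalWord_append (w₁ w₂ : List (Fin n × Bool)) :
    evalWord X (w₁ ++ w₂) = evalWord X w₁ * evalWord X w₂ := by
  simp [evalWord]

lemma evalWord_reverse_map_letterInv (w : List (Fin n × Bool)) :
    evalWord X (w.map letterInv).reverse = (evalWord X w)⁻¹ := by
  rw [evalWord, evalWord, List.prod_inv_reverse, List.map_reverse, List.map_map, List.map_map]
  congr 3
  ext ⟨i, b⟩
  cases b <;> simp [letterInv]

lemma exists_evalWord_eq (hX : Subgroup.closure (Set.range X) = ⊤) (g : G) :
    ∃ w : List (Fin n × Bool), evalWord X w = g := by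
  have hg : g ∈ Subgroup.closure (Set.range X) := hX ▸ Subgroup.mem_top g
  induction hg using Subgroup.closure_induction with
  | mem x hx =>
    obtain ⟨i, rfl⟩ := hx
    exact ⟨[(i, true)], by simp [evalWord]⟩
  | one => exact ⟨[], rfl⟩
  | mul x y _ _ hx hy =>
    obtain ⟨w₁, rfl⟩ := hx
    obtain ⟨w₂, rfl⟩ := hy
    exact ⟨w₁ ++ w₂, evalWord_append X w₁ w₂⟩
  | inv x _ hx =>
    obtain ⟨w, rfl⟩ := hx
    exact ⟨(w.map letterInv).reverse, evalWord_reverse_map_letterInv X w⟩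

end

namespace IsPalindrome

variable {G : Type*} {n : ℕ} [Group G] {X : Fin n → G}

lemma inv {p : G} (hp : IsPalindrome X p) : IsPalindrome X p⁻¹ := by
  obtain ⟨w, hw, rfl⟩ := hp
  refine ⟨(w.map letterInv).reverse, ?_, evalWord_reverse_map_letterInv X w⟩
  rw [List.reverse_reverse, ← List.map_reverse, hw]

lemma reverse_mul_mul_evalWord (w : List (Fin n × Bool)) {p : G} (hp : IsPalindrome X p) :
    IsPalindrome X (evalWord X w.reverse * p * evalWord X w) := by
  obtain ⟨v, hv, rfl⟩ := hp
  refine ⟨w.reverse ++ v ++ w, ?_, ?_⟩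
  · simp [hv]
  · rw [evalWord_append, evalWord_append]

end IsPalindrome

section

variable {G : Type*} {n : ℕ} [Group G] {X : Fin n → G}

lemma isPalindrome_zpow (i : Fin n) (k : ℤ) : IsPalindrome X (X i ^ k) := by
  cases k with
  | ofNat m =>
    exact ⟨List.replicate m (i, true), List.reverse_replicate, by simp [evalWord]⟩
  | negSucc m =>
    exact ⟨List.replicate (m + 1) (i, false), List.reverse_replicate,
      by simp [evalWord, zpow_negSucc, inv_pow]⟩

lemma exists_mul_mul_isPalindrome (hX : Subgroup.closure (Set.range X) = ⊤) (u : G) :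
    ∃ ρ : G, ∀ p : G, IsPalindrome X p → IsPalindrome X (ρ * p * u) := by
  obtain ⟨w, rfl⟩ := exists_evalWord_eq X hX u
  exact ⟨evalWord X w.reverse, fun _ => IsPalindrome.reverse_mul_mul_evalWord w⟩

lemma isPalProd_four_mul {a b c d : G} (ha : IsPalindrome X a) (hb : IsPalindrome X b)
    (hc : IsPalindrome X c) (hd : IsPalindrome X d) : IsPalProd X 4 (a * b * c * d) := by
  refine ⟨![a, b, c, d], fun j => ?_, by simp [List.ofFn_succ, mul_assoc]⟩
  fin_cases j <;> assumption

lemma isPalProd_four_inv_mul_inv_mul_inv_mul_mul_mul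
    (hX : Subgroup.closure (Set.range X) = ⊤) (u : G) {p q r : G}
    (hp : IsPalindrome X p) (hq : IsPalindrome X q) (hr : IsPalindrome X r) :
    IsPalProd X 4 (u⁻¹ * q⁻¹ * p⁻¹ * u * p * r) := by
  obtain ⟨ρ, hρ⟩ := exists_mul_mul_isPalindrome hX u
  have key : u⁻¹ * q⁻¹ * p⁻¹ * u * p * r = (ρ * q * u)⁻¹ * (ρ * p⁻¹ * u) * p * r := by group
  rw [key]
  exact isPalProd_four_mul (hρ q hq).inv (hρ p⁻¹ hp.inv) hp hr

end

/-- (a) For every `u` and all palindromes `p, q`, the commutator `[u, pq]` is a product of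
4 palindromes; (b) every element `[u, p x^α] x^β` with `p` a palindrome and `x` a generator
is a product of 4 palindromes. -/
theorem isPalProd_four {G : Type*} [Group G] {n : ℕ} (X : Fin n → G)
    (hX : Subgroup.closure (Set.range X) = ⊤) :
    (∀ u p q : G, IsPalindrome X p → IsPalindrome X q → IsPalProd X 4 (pcomm u (p * q))) ∧
      (∀ (u p : G) (i : Fin n) (α β : ℤ), IsPalindrome X p →
        IsPalProd X 4 (pcomm u (p * X i ^ α) * X i ^ β)) := by
  refine ⟨fun u p q hp hq => ?_, fun u p i α β hp => ?_⟩
  · have h := isPalProd_four_inv_mul_inv_mul_inv_mul_mul_mul hX u hp hq hq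
    rwa [show u⁻¹ * q⁻¹ * p⁻¹ * u * p * q = pcomm u (p * q) by simp only [pcomm]; group] at h
  · have h := isPalProd_four_inv_mul_inv_mul_inv_mul_mul_mul hX u hp
      (isPalindrome_zpow i α) (isPalindrome_zpow i (α + β))
    rwa [show u⁻¹ * (X i ^ α)⁻¹ * p⁻¹ * u * p * X i ^ (α + β) =
        pcomm u (p * X i ^ α) * X i ^ β by simp only [pcomm, zpow_add]; group] at h
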